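/- arXiv:1811.03183 — 3 statements merged into one kernel-verified Lean document; each statement's English description precedes it below -/
import Mathlib

section
/- For distinct reals $x_1,\dots,x_N$ and $y_1,\dots,y_N$ with $x_j + y_k \neq 0$ for all $j,k$, the determinant of the $N\times N$ matrix with entries $1/(x_j+y_k)$ equals $\prod_{1\le j<k\le N}(x_k-x_j)(y_k-y_j) / \prod_{j,k=1}^N (x_j+y_k)$. -/
/-!
Pivoting on the top-left entry of `(1 / (x j + y k))` leaves the Schur complement with entries
`1/(x i + y j) - (x 0 + y 0)/((x i + y 0)(x 0 + y j)) = (x i - x 0)(y j - y 0)/((x i + y 0)(x 0 + y j)(x i + y j))`,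
a Cauchy matrix of size one less with rows and columns rescaled; induct on the size.
-/

open Finset

namespace Matrix

variable {K : Type*} [Field K]

theorem det_succ_eq_mul_det_schurComplement {n : ℕ}
    (A : Matrix (Fin (n + 1)) (Fin (n + 1)) K) (h : A 0 0 ≠ 0) :
    A.det = A 0 0 *
      (of fun i j : Fin n => A i.succ j.succ - A i.succ 0 / A 0 0 * A 0 j.succ).det := by
  have elim : A.det =
      (of fun i j => if i = 0 then A i j else A i j - A i 0 / A 0 0 * A 0 j).det := by
    refine det_eq_of_forall_row_eq_smul_add_const
      (fun i => if i = 0 then 0 else A i 0 / A 0 0) 0 (if_pos rfl) fun i j => ?_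
    by_cases hi : i = 0 <;> simp [hi]
  rw [elim, det_succ_column_zero, Fin.sum_univ_succ]
  simp [Fin.succ_ne_zero, submatrix, h]

theorem det_one_div_add_succ {n : ℕ} (x y : Fin (n + 1) → K) (hxy : ∀ j k, x j + y k ≠ 0) :
    (of fun j k => 1 / (x j + y k)).det =
      1 / (x 0 + y 0) * (∏ i : Fin n, (x i.succ - x 0) / (x i.succ + y 0)) *
        (∏ j : Fin n, (y j.succ - y 0) / (x 0 + y j.succ)) *
          (of fun i j : Fin n => 1 / (x i.succ + y j.succ)).det := by
  have schur : (of fun i j : Fin n => 1 / (x i.succ + y j.succ) -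
        1 / (x i.succ + y 0) / (1 / (x 0 + y 0)) * (1 / (x 0 + y j.succ))) =
      of fun i j => (x i.succ - x 0) / (x i.succ + y 0) *
        (of fun i j => (y j.succ - y 0) / (x 0 + y j.succ) *
          (of fun i j : Fin n => 1 / (x i.succ + y j.succ)) i j) i j := by
    ext i j
    have := hxy i.succ j.succ; have := hxy i.succ 0; have := hxy 0 j.succ; have := hxy 0 0
    simp only [of_apply]
    field_simp
    ring
  rw [det_succ_eq_mul_det_schurComplement _ (one_div_ne_zero (hxy 0 0))]
  simp only [of_apply]
  rw [schur, det_mul_column, det_mul_row]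
  ring

theorem det_one_div_add {n : ℕ} (x y : Fin n → K) (hxy : ∀ j k, x j + y k ≠ 0) :
    (of fun j k => 1 / (x j + y k)).det =
      (∏ j, ∏ k ∈ Ioi j, (x k - x j) * (y k - y j)) / ∏ j, ∏ k, (x j + y k) := by
  induction n with
  | zero => simp
  | succ n ih =>
    rw [det_one_div_add_succ x y hxy, ih _ _ fun j k => hxy j.succ k.succ]
    simp only [Fin.prod_univ_succ (n := n), Fin.prod_Ioi_zero, Fin.prod_Ioi_succ,
      prod_mul_distrib, prod_div_distrib]
    have := hxy 0 0
    have : ∏ i : Fin n, (x i.succ + y 0) ≠ 0 := prod_ne_zero_iff.2 fun i _ => hxy _ _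
    have : ∏ j : Fin n, (x 0 + y j.succ) ≠ 0 := prod_ne_zero_iff.2 fun j _ => hxy _ _
    have : ∏ i : Fin n, ∏ j : Fin n, (x i.succ + y j.succ) ≠ 0 :=
      prod_ne_zero_iff.2 fun i _ => prod_ne_zero_iff.2 fun j _ => hxy _ _
    field_simp

end Matrix

theorem cauchy_double_alternant_general (N : ℕ) (x y : Fin N → ℝ)
    (hxy : ∀ j k, x j + y k ≠ 0) :
    Matrix.det (Matrix.of fun j k : Fin N => 1 / (x j + y k)) =
      (∏ j : Fin N, ∏ k ∈ Finset.Ioi j, (x k - x j) * (y k - y j)) /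
        ∏ j : Fin N, ∏ k : Fin N, (x j + y k) :=
  Matrix.det_one_div_add x y hxy

/-- Cauchy double alternant identity. -/
theorem cauchy_double_alternant (N : ℕ) (x y : Fin N → ℝ)
    (hx : Function.Injective x) (hy : Function.Injective y)
    (hxy : ∀ j k, x j + y k ≠ 0) :
    Matrix.det (Matrix.of fun j k : Fin N => 1 / (x j + y k)) =
      (∏ j : Fin N, ∏ k ∈ Finset.Ioi j, (x k - x j) * (y k - y j)) /
        ∏ j : Fin N, ∏ k : Fin N, (x j + y k) :=
  cauchy_double_alternant_general N x y hxy
end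

section
/- Let $\alpha > -1$ and let $u, v$ be complex numbers with $u+v \ne \alpha+1$. Then for every positive integer $N$, $\sum_{n=0}^{N-1} (2n+\alpha+1) \frac{\Gamma(\alpha+n-u+1)\Gamma(\alpha+n-v+1)}{\Gamma(n+1+u)\Gamma(n+1+v)} = \frac{1}{1-\alpha-u-v}\left(\frac{\Gamma(\alpha+N+1-u)\Gamma(\alpha+N+1-v)}{\Gamma(N+u)\Gamma(N+v)} - \frac{\Gamma(\alpha+1-u)\Gamma(\alpha+1-v)}{\Gamma(u)\Gamma(v)}\right)$, provided no Gamma function in the expression is evaluated at a nonpositive integer. -/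
/-!
With `f n = Γ(α+n+1-u) Γ(α+n+1-v) / (Γ(n+u) Γ(n+v))`, the functional equation `Γ(s+1) = s Γ(s)`
gives `f (n+1) - f n = ((α+n+1-u)(α+n+1-v) - (n+u)(n+v)) · Γ(α+n+1-u) Γ(α+n+1-v) / (Γ(n+1+u) Γ(n+1+v))`,
and the polynomial factor is `(2n+α+1)(1+α-u-v)`. Dividing by `1+α-u-v` and summing telescopes.
-/

open Complex Finset

noncomputable def gammaQuotient (α u v : ℂ) (n : ℕ) : ℂ :=
  Gamma (α + n + 1 - u) * Gamma (α + n + 1 - v) / (Gamma (n + u) * Gamma (n + v))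

lemma ne_zero_of_Gamma_ne_zero {s : ℂ} (hs : Gamma s ≠ 0) : s ≠ 0 :=
  fun h => hs (h ▸ Gamma_zero)

lemma gammaQuotient_succ_sub (α u v : ℂ) {n : ℕ}
    (hu : Gamma (n + u) ≠ 0) (hv : Gamma (n + v) ≠ 0)
    (hu' : Gamma (α + n + 1 - u) ≠ 0) (hv' : Gamma (α + n + 1 - v) ≠ 0) :
    gammaQuotient α u v (n + 1) - gammaQuotient α u v n =
      (1 + α - u - v) * ((2 * n + α + 1) *
        (Gamma (α + n - u + 1) * Gamma (α + n - v + 1) /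
          (Gamma (n + 1 + u) * Gamma (n + 1 + v)))) := by
  have hx := ne_zero_of_Gamma_ne_zero hu
  have hy := ne_zero_of_Gamma_ne_zero hv
  have hp := ne_zero_of_Gamma_ne_zero hu'
  have hq := ne_zero_of_Gamma_ne_zero hv'
  simp only [gammaQuotient, Nat.cast_succ]
  rw [show α + (n + 1) + 1 - u = (α + n + 1 - u) + 1 by ring, Gamma_add_one _ hp,
    show α + (n + 1) + 1 - v = (α + n + 1 - v) + 1 by ring, Gamma_add_one _ hq,
    show (n : ℂ) + 1 + u = (n + u) + 1 by ring, Gamma_add_one _ hx,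
    show (n : ℂ) + 1 + v = (n + v) + 1 by ring, Gamma_add_one _ hy,
    show α + n - u + 1 = α + n + 1 - u by ring, show α + n - v + 1 = α + n + 1 - v by ring]
  field_simp
  ring

theorem cd_gamma_sum_general (α : ℝ) (u v : ℂ) (huv : u + v ≠ (α:ℂ) + 1)
    (N : ℕ)
    (hden : ∀ n : ℕ, n ≤ N →
      Complex.Gamma ((n:ℂ) + u) ≠ 0 ∧ Complex.Gamma ((n:ℂ) + v) ≠ 0)
    (hnum : ∀ n : ℕ, n ≤ N →
      Complex.Gamma ((α:ℂ) + n + 1 - u) ≠ 0 ∧ Complex.Gamma ((α:ℂ) + n + 1 - v) ≠ 0) :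
    (∑ n ∈ Finset.range N, (2 * (n:ℂ) + (α:ℂ) + 1) *
        (Complex.Gamma ((α:ℂ) + n - u + 1) * Complex.Gamma ((α:ℂ) + n - v + 1) /
          (Complex.Gamma ((n:ℂ) + 1 + u) * Complex.Gamma ((n:ℂ) + 1 + v)))) =
      (1 / (1 + (α:ℂ) - u - v)) *
        (Complex.Gamma ((α:ℂ) + N + 1 - u) * Complex.Gamma ((α:ℂ) + N + 1 - v) /
            (Complex.Gamma ((N:ℂ) + u) * Complex.Gamma ((N:ℂ) + v)) -
          Complex.Gamma ((α:ℂ) + 1 - u) * Complex.Gamma ((α:ℂ) + 1 - v) /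
            (Complex.Gamma u * Complex.Gamma v)) := by
  have hc : 1 + (α : ℂ) - u - v ≠ 0 := fun h => huv (by linear_combination -h)
  have hstep : ∀ n ∈ range N,
      (2 * (n : ℂ) + α + 1) * (Gamma (α + n - u + 1) * Gamma (α + n - v + 1) /
          (Gamma (n + 1 + u) * Gamma (n + 1 + v))) =
        1 / (1 + α - u - v) * (gammaQuotient α u v (n + 1) - gammaQuotient α u v n) := by
    intro n hn
    obtain ⟨hu, hv⟩ := hden n (mem_range.1 hn).le
    obtain ⟨hu', hv'⟩ := hnum n (mem_range.1 hn).le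
    rw [gammaQuotient_succ_sub α u v hu hv hu' hv', one_div, inv_mul_cancel_left₀ hc]
  rw [sum_congr rfl hstep, ← mul_sum, sum_range_sub]
  simp [gammaQuotient]

/-- Telescoping Christoffel–Darboux-type summation identity for ratios of Gamma
functions. The hypotheses ensure no Gamma function in the expression is
evaluated at a nonpositive integer (equivalently, all the Gamma values are
nonzero). -/
theorem cd_gamma_sum (α : ℝ) (hα : -1 < α) (u v : ℂ) (huv : u + v ≠ (α:ℂ) + 1)
    (N : ℕ) (hN : 0 < N)
    (hu : Complex.Gamma u ≠ 0) (hv : Complex.Gamma v ≠ 0)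
    (hden : ∀ n : ℕ, n ≤ N →
      Complex.Gamma ((n:ℂ) + u) ≠ 0 ∧ Complex.Gamma ((n:ℂ) + v) ≠ 0)
    (hnum : ∀ n : ℕ, n ≤ N →
      Complex.Gamma ((α:ℂ) + n + 1 - u) ≠ 0 ∧ Complex.Gamma ((α:ℂ) + n + 1 - v) ≠ 0) :
    (∑ n ∈ Finset.range N, (2 * (n:ℂ) + (α:ℂ) + 1) *
        (Complex.Gamma ((α:ℂ) + n - u + 1) * Complex.Gamma ((α:ℂ) + n - v + 1) /
          (Complex.Gamma ((n:ℂ) + 1 + u) * Complex.Gamma ((n:ℂ) + 1 + v)))) =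
      (1 / (1 + (α:ℂ) - u - v)) *
        (Complex.Gamma ((α:ℂ) + N + 1 - u) * Complex.Gamma ((α:ℂ) + N + 1 - v) /
            (Complex.Gamma ((N:ℂ) + u) * Complex.Gamma ((N:ℂ) + v)) -
          Complex.Gamma ((α:ℂ) + 1 - u) * Complex.Gamma ((α:ℂ) + 1 - v) /
            (Complex.Gamma u * Complex.Gamma v)) :=
  cd_gamma_sum_general α u v huv N hden hnum
end

section
/- (Schur's Pfaffian identity, even case) For an even positive integer $N$ and distinct positive reals $x_1, \dots, x_N$, the Pfaffian of the antisymmetric matrix $A$ with entries $a_{jk} = \frac{x_k - x_j}{x_k + x_j}$ equals $\prod_{1 \le j < k \le N} \frac{x_k - x_j}{x_k + x_j}$. -/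
/-- The Pfaffian of a `2m × 2m` antisymmetric matrix, defined by
`Pf(A) = (1/(2^m m!)) ∑_{σ ∈ S_{2m}} sgn(σ) ∏_{i=1}^m a_{σ(2i-1),σ(2i)}`. -/
noncomputable def pfaffian {m : ℕ} (A : Matrix (Fin (2 * m)) (Fin (2 * m)) ℝ) : ℝ :=
  (1 / (2 ^ m * (m.factorial : ℝ))) *
    ∑ σ : Equiv.Perm (Fin (2 * m)), ((Equiv.Perm.sign σ : ℤ) : ℝ) *
      ∏ i : Fin m,
        A (σ ⟨2 * i.1, by have := i.isLt; omega⟩) (σ ⟨2 * i.1 + 1, by have := i.isLt; omega⟩)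

/-! Choosing `σ 0 = j` and `σ 1 = l` in the defining sum expands the Pfaffian of any
`2(m+1) × 2(m+1)` matrix along all rows at once:
`Pf A = (2(m+1))⁻¹ ∑_{j ≠ l} ± a_{jl} Pf(A without rows and columns j, l)`.
By induction the minors are Schur products, and for each `j` the sum over `l` collapses to the
full Schur product by the partial-fraction identity, valid for an odd number of distinct `y_k`,
`∑_k (y_k - t)/(y_k + t) ∏_{l ≠ k} (y_l + y_k)/(y_l - y_k) = ∏_l (y_l - t)/(y_l + t)`.
This is Lagrange interpolation at the nodes `-y_k` of `∏ (X + y_l) - ∏ (X - y_l)`, whose degree is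
below the number of nodes; at `t = 0` it also gives `∑_k ∏_{l ≠ k} (y_l + y_k)/(y_l - y_k) = 1`. -/

open Finset

theorem prod_neg_of_odd {ι M : Type*} [CommMonoid M] [HasDistribNeg M] {s : Finset ι}
    (hs : Odd #s) (f : ι → M) : ∏ i ∈ s, -f i = -∏ i ∈ s, f i := by
  rw [prod_neg, hs.neg_one_pow, neg_one_mul]

section PartialFractions

variable {K ι : Type*} [Field K] [DecidableEq ι] {S : Finset ι} {y : ι → K}

open Polynomial Lagrange in
theorem prod_sub_div_add_add_one (hS : Odd #S) (hy : Set.InjOn y S) {t : K}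
    (ht : ∀ k ∈ S, y k + t ≠ 0) :
    ∏ l ∈ S, (y l - t) / (y l + t) + 1 =
      ∑ k ∈ S, 2 * y k / (y k + t) * ∏ l ∈ S.erase k, (y l + y k) / (y l - y k) := by
  set f : K[X] := nodal S (-y) - nodal S y
  have hdeg : f.degree < #S := by
    rw [← degree_nodal (v := -y)]
    exact degree_sub_lt_left (by rw [degree_nodal, degree_nodal]) nodal_ne_zero
      (by rw [nodal_monic.leadingCoeff, nodal_monic.leadingCoeff])
  have hinj : Set.InjOn (-y) S := fun a ha b hb h => hy ha hb (neg_injective h)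
  have hnode : ∀ k ∈ S, t ≠ (-y) k := fun k hk h =>
    ht k hk (by rw [h, Pi.neg_apply, add_neg_cancel])
  have key := congrArg (eval t) (eq_interpolate hinj hdeg)
  rw [eval_interpolate_not_at_node _ hnode] at key
  simp only [f, eval_sub, eval_nodal, Pi.neg_apply, sub_neg_eq_add, nodalWeight] at key
  have hterm : ∀ k ∈ S, (∏ l ∈ S.erase k, (-y k + y l)⁻¹) * (t + y k)⁻¹ *
      (∏ l ∈ S, (-y k + y l) - ∏ l ∈ S, (-y k - y l)) =
      2 * y k / (y k + t) * ∏ l ∈ S.erase k, (y l + y k) / (y l - y k) := by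
    intro k hk
    have hneg : ∀ l, -y k - y l = -(y l + y k) := fun l => by ring
    rw [prod_eq_zero hk (neg_add_cancel _), zero_sub, prod_congr rfl fun l _ => hneg l,
      prod_neg_of_odd hS, neg_neg, ← mul_prod_erase S _ hk, prod_div_distrib, prod_inv_distrib]
    simp only [neg_add_eq_sub]
    ring
  rw [sum_congr rfl hterm, prod_congr rfl fun l _ => (neg_sub (y l) t).symm,
    prod_neg_of_odd hS] at key
  have hP : ∏ l ∈ S, (y l + t) ≠ 0 := prod_ne_zero_iff.2 ht
  rw [prod_div_distrib, div_add_one hP, div_eq_iff hP]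
  simp only [add_comm t] at key
  linear_combination key

theorem sum_prod_erase_add_div_sub_eq_one [NeZero (2 : K)] (hS : Odd #S) (hy : Set.InjOn y S)
    (hy0 : ∀ k ∈ S, y k ≠ 0) :
    ∑ k ∈ S, ∏ l ∈ S.erase k, (y l + y k) / (y l - y k) = 1 := by
  have h := prod_sub_div_add_add_one hS hy (t := 0) (by simpa using hy0)
  simp only [sub_zero, add_zero] at h
  rw [prod_congr rfl fun l hl => div_self (hy0 l hl), prod_const_one,
    sum_congr rfl fun k hk => by rw [mul_div_assoc, div_self (hy0 k hk), mul_one], ← mul_sum] at h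
  exact mul_right_injective₀ (two_ne_zero (α := K)) (by linear_combination -h)

theorem sum_sub_div_add_mul_prod_erase [NeZero (2 : K)] (hS : Odd #S) (hy : Set.InjOn y S)
    (hy0 : ∀ k ∈ S, y k ≠ 0) {t : K} (ht : ∀ k ∈ S, y k + t ≠ 0) :
    ∑ k ∈ S, (y k - t) / (y k + t) * ∏ l ∈ S.erase k, (y l + y k) / (y l - y k) =
      ∏ l ∈ S, (y l - t) / (y l + t) := by
  have hsplit : ∀ k ∈ S, (y k - t) / (y k + t) = 2 * y k / (y k + t) - 1 := fun k hk => by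
    field_simp [ht k hk]
    ring
  rw [sum_congr rfl fun k hk => by rw [hsplit k hk, sub_mul, one_mul], sum_sub_distrib,
    ← prod_sub_div_add_add_one hS hy ht, sum_prod_erase_add_div_sub_eq_one hS hy hy0,
    add_sub_cancel_right]

end PartialFractions

theorem prod_prod_Ioi_eq_mul_succAbove {R : Type*} [CommRing R] {n : ℕ}
    (g : Fin (n + 1) → Fin (n + 1) → R) (hg : ∀ i k, i ≠ k → g k i = -g i k) (j : Fin (n + 1)) :
    ∏ i, ∏ k ∈ Ioi i, g i k =
      (-1) ^ (j : ℕ) * (∏ k, g j (j.succAbove k)) *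
        ∏ i, ∏ k ∈ Ioi i, g (j.succAbove i) (j.succAbove k) := by
  have hIoi : ∀ {N : ℕ} (p : Fin N) (f : Fin N → R),
      ∏ k ∈ Ioi p, f k = ∏ k, if p < k then f k else 1 := fun p f => by
    rw [← prod_filter, filter_lt_eq_Ioi]
  have hsign : ∏ k : Fin n, (if j.succAbove k < j then (-1 : R) else 1) = (-1) ^ (j : ℕ) := by
    have := Fin.prod_univ_succAbove (fun i => if i < j then (-1 : R) else 1) j
    rw [if_neg (lt_irrefl j), one_mul] at this
    rw [← this, ← prod_filter, filter_gt_eq_Iio, prod_const, Fin.card_Iio]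
  have hrow : ∀ k : Fin n, (if j < j.succAbove k then g j (j.succAbove k) else 1) *
      (if j.succAbove k < j then g (j.succAbove k) j else 1) =
      (if j.succAbove k < j then (-1 : R) else 1) * g j (j.succAbove k) := by
    intro k
    rcases (Fin.succAbove_ne j k).lt_or_gt with h | h
    · rw [if_neg h.asymm, if_pos h, if_pos h, hg _ _ (Fin.succAbove_ne j k).symm]; ring
    · rw [if_pos h, if_neg h.asymm, if_neg h.asymm]; ring
  simp_rw [hIoi, Fin.prod_univ_succAbove _ j, lt_irrefl, if_false, one_mul,
    (Fin.strictMono_succAbove j).lt_iff_lt, prod_mul_distrib, ← mul_assoc, ← prod_mul_distrib,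
    hrow, prod_mul_distrib, hsign]

section SchurProduct

variable {K : Type*} [Field K]

def schurProd {n : ℕ} (x : Fin n → K) : K :=
  ∏ j, ∏ k ∈ Ioi j, (x k - x j) / (x k + x j)

theorem schurProd_eq_mul_comp_succAbove {n : ℕ} (x : Fin (n + 1) → K) (j : Fin (n + 1)) :
    schurProd x = (-1) ^ (j : ℕ) * (∏ k, (x (j.succAbove k) - x j) / (x (j.succAbove k) + x j)) *
      schurProd (x ∘ j.succAbove) :=
  prod_prod_Ioi_eq_mul_succAbove _ (fun a b _ => by rw [add_comm, ← neg_sub, neg_div]) j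

theorem sum_mul_schurProd_comp_succAbove [NeZero (2 : K)] {n : ℕ} (hn : Even n)
    {y : Fin (n + 1) → K} (hinj : Function.Injective y) (hy : ∀ a b, y a + y b ≠ 0) {t : K}
    (ht : ∀ k, y k + t ≠ 0) :
    ∑ k : Fin (n + 1), (-1) ^ (k : ℕ) * ((y k - t) / (y k + t)) * schurProd (y ∘ k.succAbove) =
      (∏ k, (y k - t) / (y k + t)) * schurProd y := by
  set P : Fin (n + 1) → K := fun k => ∏ i, (y (k.succAbove i) - y k) / (y (k.succAbove i) + y k)
  have hP : ∀ k, P k ≠ 0 := fun k => prod_ne_zero_iff.2 fun i _ =>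
    div_ne_zero (sub_ne_zero.2 (hinj.ne (Fin.succAbove_ne k i))) (hy _ _)
  have hPinv : ∀ k, (P k)⁻¹ = ∏ l ∈ univ.erase k, (y l + y k) / (y l - y k) := by
    intro k
    rw [← compl_singleton, ← Fin.image_succAbove_univ,
      prod_image Fin.succAbove_right_injective.injOn, ← prod_inv_distrib]
    simp_rw [inv_div]
  have hodd : Odd #(univ : Finset (Fin (n + 1))) := by
    rw [card_univ, Fintype.card_fin]; exact hn.add_one
  have hexpand : ∀ k : Fin (n + 1),
      schurProd y = (-1) ^ (k : ℕ) * P k * schurProd (y ∘ k.succAbove) :=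
    schurProd_eq_mul_comp_succAbove y
  have hy0 : ∀ k ∈ univ, y k ≠ 0 := fun k _ h => hy k k (by rw [h, add_zero])
  calc _ = (∑ k, (y k - t) / (y k + t) * (P k)⁻¹) * schurProd y := by
        rw [sum_mul]
        refine sum_congr rfl fun k _ => ?_
        rw [hexpand k]
        field_simp [hP k]
    _ = (∏ k, (y k - t) / (y k + t)) * schurProd y := by
        simp_rw [hPinv]
        rw [sum_sub_div_add_mul_prod_erase hodd hinj.injOn hy0 fun k _ => ht k]

theorem sum_mul_schurProd_comp_succAbove_succAbove [NeZero (2 : K)] {n : ℕ} (hn : Even n)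
    {x : Fin (n + 2) → K} (hinj : Function.Injective x) (hx : ∀ a b, x a + x b ≠ 0)
    (j : Fin (n + 2)) :
    ∑ k : Fin (n + 1), (-1) ^ (j + k : ℕ) *
        ((x (j.succAbove k) - x j) / (x (j.succAbove k) + x j)) *
        schurProd (x ∘ j.succAbove ∘ k.succAbove) = schurProd x := by
  simp_rw [pow_add, mul_assoc, ← mul_sum, ← mul_assoc]
  have hrow := sum_mul_schurProd_comp_succAbove (y := x ∘ j.succAbove) (t := x j) hn
    (hinj.comp Fin.succAbove_right_injective) (fun _ _ => hx _ _) (fun _ => hx _ _)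
  simp only [Function.comp_apply, Function.comp_assoc] at hrow
  rw [schurProd_eq_mul_comp_succAbove x j, mul_assoc, ← hrow]

end SchurProduct

namespace Equiv.Perm

variable {n : ℕ}

def consSuccAbove (j : Fin (n + 1)) (ρ : Perm (Fin n)) : Perm (Fin (n + 1)) :=
  (Fin.cycleRange j)⁻¹ * decomposeFin.symm (0, ρ)

@[simp]
theorem consSuccAbove_zero (j : Fin (n + 1)) (ρ : Perm (Fin n)) : consSuccAbove j ρ 0 = j := by
  rw [consSuccAbove, mul_apply, decomposeFin_symm_apply_zero]
  exact Fin.cycleRange_symm_zero j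

@[simp]
theorem consSuccAbove_succ (j : Fin (n + 1)) (ρ : Perm (Fin n)) (i : Fin n) :
    consSuccAbove j ρ i.succ = j.succAbove (ρ i) := by
  rw [consSuccAbove, mul_apply, decomposeFin_symm_apply_succ, swap_self, refl_apply]
  exact Fin.cycleRange_symm_succ j (ρ i)

theorem sign_consSuccAbove (j : Fin (n + 1)) (ρ : Perm (Fin n)) :
    sign (consSuccAbove j ρ) = (-1) ^ (j : ℕ) * sign ρ := by
  rw [consSuccAbove, map_mul, map_inv, Fin.sign_cycleRange, decomposeFin.symm_sign, if_pos rfl,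
    one_mul, Int.units_inv_eq_self]

theorem consSuccAbove_bijective :
    Function.Bijective fun p : Fin (n + 1) × Perm (Fin n) => consSuccAbove p.1 p.2 := by
  refine (Fintype.bijective_iff_injective_and_card _).2
    ⟨?_, by simp [Fintype.card_perm, Nat.factorial_succ]⟩
  rintro ⟨j, ρ⟩ ⟨j', ρ'⟩ h
  obtain rfl : j = j' := by simpa using congr($h 0)
  have := decomposeFin.symm.injective (mul_left_cancel h)
  simp_all

theorem sum_perm_succ {M : Type*} [AddCommMonoid M] (g : Perm (Fin (n + 1)) → M) :
    ∑ σ, g σ = ∑ j, ∑ ρ, g (consSuccAbove j ρ) := by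
  rw [← Fintype.sum_prod_type', Fintype.sum_bijective _ consSuccAbove_bijective _ _ fun _ => rfl]

end Equiv.Perm

section PfaffianExpansion

open Equiv.Perm

variable {R : Type*} [CommRing R]

def pfaffianTerm {m : ℕ} (A : Matrix (Fin (2 * m)) (Fin (2 * m)) R)
    (σ : Equiv.Perm (Fin (2 * m))) : R :=
  ((sign σ : ℤ) : R) * ∏ i : Fin m, A (σ ⟨2 * i.1, by omega⟩) (σ ⟨2 * i.1 + 1, by omega⟩)

theorem pfaffian_eq_sum_pfaffianTerm {m : ℕ} (A : Matrix (Fin (2 * m)) (Fin (2 * m)) ℝ) :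
    pfaffian A = (2 ^ m * m.factorial : ℝ)⁻¹ * ∑ σ, pfaffianTerm A σ := by
  rw [pfaffian, one_div]
  rfl

theorem pfaffianTerm_consSuccAbove {m : ℕ} (A : Matrix (Fin (2 * (m + 1))) (Fin (2 * (m + 1))) R)
    (j : Fin (2 * m + 2)) (k : Fin (2 * m + 1)) (τ : Equiv.Perm (Fin (2 * m))) :
    pfaffianTerm A (consSuccAbove j (consSuccAbove k τ)) =
      (-1) ^ (j + k : ℕ) * A j (j.succAbove k) *
        pfaffianTerm (A.submatrix (j.succAbove ∘ k.succAbove) (j.succAbove ∘ k.succAbove)) τ := by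
  have h0 : (⟨2 * (0 : Fin (m + 1)).1, by omega⟩ : Fin (2 * m + 2)) = 0 := rfl
  have h1 : (⟨2 * (0 : Fin (m + 1)).1 + 1, by omega⟩ : Fin (2 * m + 2)) = Fin.succ 0 := rfl
  have heven : ∀ i : Fin m, (⟨2 * i.succ.1, by omega⟩ : Fin (2 * m + 2)) =
      Fin.succ (Fin.succ ⟨2 * i.1, by omega⟩) :=
    fun i => Fin.ext (by simp only [Fin.val_succ]; ring)
  have hodd : ∀ i : Fin m, (⟨2 * i.succ.1 + 1, by omega⟩ : Fin (2 * m + 2)) =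
      Fin.succ (Fin.succ ⟨2 * i.1 + 1, by omega⟩) :=
    fun i => Fin.ext (by simp only [Fin.val_succ]; ring)
  unfold pfaffianTerm
  rw [Fin.prod_univ_succ, sign_consSuccAbove, sign_consSuccAbove]
  simp only [h0, h1, heven, hodd, consSuccAbove_zero, consSuccAbove_succ, Matrix.submatrix_apply,
    Function.comp_apply]
  push_cast
  ring

theorem pfaffian_succ {m : ℕ} (A : Matrix (Fin (2 * (m + 1))) (Fin (2 * (m + 1))) ℝ) :
    pfaffian A = (2 * (m + 1) : ℝ)⁻¹ * ∑ j : Fin (2 * m + 2), ∑ k : Fin (2 * m + 1),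
      (-1) ^ (j + k : ℕ) * A j (j.succAbove k) *
        pfaffian (A.submatrix (j.succAbove ∘ k.succAbove) (j.succAbove ∘ k.succAbove)) := by
  have hsplit : ∑ σ, pfaffianTerm A σ =
      ∑ j, ∑ k, ∑ τ, pfaffianTerm A (consSuccAbove j (consSuccAbove k τ)) :=
    (sum_perm_succ _).trans (sum_congr rfl fun j _ => sum_perm_succ _)
  rw [pfaffian_eq_sum_pfaffianTerm A, hsplit]
  simp_rw [pfaffianTerm_consSuccAbove, ← mul_sum, pfaffian_eq_sum_pfaffianTerm,
    mul_left_comm _ (2 ^ m * (m.factorial : ℝ))⁻¹, ← mul_sum, ← mul_assoc]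
  congr 1
  rw [Nat.factorial_succ]
  push_cast
  field_simp
  ring

end PfaffianExpansion

theorem schur_pfaffian_general (m : ℕ) (x : Fin (2 * m) → ℝ)
    (hx : ∀ j, 0 < x j) (hinj : Function.Injective x) :
    pfaffian (Matrix.of fun j k : Fin (2 * m) => (x k - x j) / (x k + x j)) =
      ∏ j : Fin (2 * m), ∏ k ∈ Finset.Ioi j, (x k - x j) / (x k + x j) := by
  induction m with
  | zero => simp [pfaffian]
  | succ m ih =>
    show _ = schurProd x
    have hminor : ∀ (j : Fin (2 * m + 2)) (k : Fin (2 * m + 1)),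
        pfaffian ((Matrix.of fun a b : Fin (2 * (m + 1)) => (x b - x a) / (x b + x a)).submatrix
          (j.succAbove ∘ k.succAbove) (j.succAbove ∘ k.succAbove)) =
        schurProd (x ∘ j.succAbove ∘ k.succAbove) := fun j k =>
      ih _ (fun _ => hx _)
        (hinj.comp (Fin.succAbove_right_injective.comp Fin.succAbove_right_injective))
    have hrow := sum_mul_schurProd_comp_succAbove_succAbove (n := 2 * m) (even_two_mul m) hinj
      fun a b => (add_pos (hx a) (hx b)).ne'
    simp_rw [pfaffian_succ, hminor, Matrix.of_apply, hrow, sum_const, card_univ, Fintype.card_fin,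
      nsmul_eq_mul]
    push_cast
    field_simp

/-- Schur's Pfaffian identity (even case). -/
theorem schur_pfaffian (m : ℕ) (hm : 0 < m) (x : Fin (2 * m) → ℝ)
    (hx : ∀ j, 0 < x j) (hinj : Function.Injective x) :
    pfaffian (Matrix.of fun j k : Fin (2 * m) => (x k - x j) / (x k + x j)) =
      ∏ j : Fin (2 * m), ∏ k ∈ Finset.Ioi j, (x k - x j) / (x k + x j) :=
  schur_pfaffian_general m x hx hinj
end
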